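/- For every hypergraph H = (V, E) on n ≥ 1 vertices, ∑_{e ∈ E} 1/γ_H(e) ≤ n − κ(H), where κ(H) is the number of connected components of H. -/

import Mathlib

/- A hypergraph on a finite vertex type `V` is given by a multiset `E` of edges,
each edge a `Finset V` (with at least 2 vertices, stated as a hypothesis). -/

variable {V : Type*} [Fintype V] [DecidableEq V]

/-- `δ_H(A)`: the (multiset of) edges of `E` crossing the cut `A`. -/
def cutEdges (E : Multiset (Finset V)) (A : Finset V) : Multiset (Finset V) :=
  E.filter (fun e => (e ∩ A).Nonempty ∧ (e \ A).Nonempty)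

/-- Edge multiset of the subhypergraph `H[U]` induced on `U`. -/
def induced (E : Multiset (Finset V)) (U : Finset V) : Multiset (Finset V) :=
  E.filter (fun e => e ⊆ U)

/-- Edge-connectivity `λ(H[U])`: the minimum number of edges of `H[U]` crossing a
nonempty proper subset `A ⊊ U`. -/
noncomputable def lam (E : Multiset (Finset V)) (U : Finset V) : ℕ :=
  sInf {k : ℕ | ∃ A : Finset V, A ⊆ U ∧ A.Nonempty ∧ A ≠ U ∧
    k = Multiset.card (cutEdges (induced E U) A)}

/-- Strength `γ_H(e)`: the maximum of `λ(H[U])` over all `U` with `e ⊆ U ⊆ V`. -/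
noncomputable def strength (E : Multiset (Finset V)) (e : Finset V) : ℕ :=
  (Finset.univ.powerset.filter (fun U => e ⊆ U)).sup (lam E)

/-- The graph on `V` joining two distinct vertices that lie in a common edge of `E`;
its connectivity notions are those of the hypergraph. -/
def toGraph (E : Multiset (Finset V)) : SimpleGraph V where
  Adj u v := u ≠ v ∧ ∃ e ∈ E, u ∈ e ∧ v ∈ e
  symm := ⟨by rintro u v ⟨h, e, he, hu, hv⟩; exact ⟨h.symm, e, he, hv, hu⟩⟩
  loopless := ⟨by rintro v ⟨h, -⟩; exact h rfl⟩

/-- `κ(H)`: the number of connected components of the hypergraph. -/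
noncomputable def kappa (E : Multiset (Finset V)) : ℕ :=
  Nat.card (toGraph E).ConnectedComponent

/-- The vertex map contracting the edge `e'` to its representative vertex `v0 ∈ e'`. -/
def contractMap (e' : Finset V) (v0 : V) : V → V := fun u => if u ∈ e' then v0 else u

/-- The hypergraph `H/e'` obtained by contracting the edge `e'` (to the representative
vertex `v0 ∈ e'`): edges contained in `e'` are removed, all other edges are replaced by
their image under the contraction. -/
def contract (E : Multiset (Finset V)) (e' : Finset V) (v0 : V) : Multiset (Finset V) :=
  (E.filter (fun f => ¬ f ⊆ e')).map (fun f => f.image (contractMap e' v0))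

/-- The degree of a vertex: the number of edges (with multiplicity) containing it. -/
def degree (E : Multiset (Finset V)) (v : V) : ℕ :=
  Multiset.card (E.filter (fun e => v ∈ e))

/-!
Induct on the vertex set `U` of an induced subhypergraph `H[U]`, splitting it along a minimum cut
`(A, U \ A)`. Edges inside `A` or inside `U \ A` are at least as strong in `H[U]` as in `H[A]`,
`H[U \ A]`, so induction bounds their contribution. If the cut is empty, `κ(H[U]) ≤ κ(H[A]) +
κ(H[U \ A])` and we are done. Otherwise `H[U]` is connected and each of the `λ(H[U])` cut edges
has strength at least `λ(H[U])`, so the cut edges contribute at most `1`, which is paid for by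
`κ(H[A]) + κ(H[U \ A]) ≥ 2 = κ(H[U]) + 1`.
-/

section Induced

variable {α : Type*} [DecidableEq α] {E : Multiset (Finset α)} {U A e : Finset α}

/-- `γ_{H[U]}(e)`, the strength of `e` in `H[U]`. -/
noncomputable def strengthOn (E : Multiset (Finset α)) (U e : Finset α) : ℕ :=
  (U.powerset.filter (fun W => e ⊆ W)).sup (lam E)

/-- `κ(H[U])`, counted through the vertices of `U`: in `toGraph (induced E U)` the vertices
outside `U` are isolated and must not be counted. -/
noncomputable def kappaOn (E : Multiset (Finset α)) (U : Finset α) : ℕ :=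
  ((toGraph (induced E U)).connectedComponentMk '' ↑U).ncard

lemma mem_induced : e ∈ induced E U ↔ e ∈ E ∧ e ⊆ U := Multiset.mem_filter

lemma filter_subset_induced (hAU : A ⊆ U) : (induced E U).filter (· ⊆ A) = induced E A := by
  rw [induced, induced, Multiset.filter_filter]
  exact Multiset.filter_congr fun e _ => ⟨fun h => h.1, fun h => ⟨h, h.trans hAU⟩⟩

lemma induced_eq_add_add_cutEdges (hE : ∀ e ∈ E, e.Nonempty) (hAU : A ⊆ U) :
    induced E U = induced E A + induced E (U \ A) + cutEdges (induced E U) A := by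
  have hsdiff : ∀ e ∈ induced E U, e ⊆ U \ A ↔ Disjoint e A := fun e he => by
    rw [Finset.subset_sdiff, and_iff_right (mem_induced.mp he).2]
  have hinside : ((induced E U).filter (¬ · ⊆ A)).filter (· ⊆ U \ A) = induced E (U \ A) := by
    rw [← filter_subset_induced Finset.sdiff_subset, Multiset.filter_filter]
    refine Multiset.filter_congr fun e he => ?_
    rw [hsdiff e he]
    refine ⟨fun h => h.1, fun h => ⟨h, fun heA => ?_⟩⟩
    exact (hE e (mem_induced.mp he).1).ne_empty
      (Finset.disjoint_self_iff_empty _ |>.mp (h.mono_right heA))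
  have hcrossing : ((induced E U).filter (¬ · ⊆ A)).filter (¬ · ⊆ U \ A) =
      cutEdges (induced E U) A := by
    rw [cutEdges, Multiset.filter_filter]
    refine Multiset.filter_congr fun e he => ?_
    rw [hsdiff e he, Finset.not_disjoint_iff_nonempty_inter, Finset.sdiff_nonempty]
  rw [add_assoc, ← hinside, ← hcrossing, Multiset.filter_add_not, ← filter_subset_induced hAU,
    Multiset.filter_add_not]

lemma lam_le_card_cutEdges (hAU : A ⊆ U) (hA : A.Nonempty) (hAU' : A ≠ U) :
    lam E U ≤ Multiset.card (cutEdges (induced E U) A) :=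
  Nat.sInf_le ⟨A, hAU, hA, hAU', rfl⟩

lemma exists_card_cutEdges_eq_lam (hU : 2 ≤ U.card) :
    ∃ A ⊆ U, A.Nonempty ∧ A ≠ U ∧ Multiset.card (cutEdges (induced E U) A) = lam E U := by
  obtain ⟨v, hv⟩ := Finset.card_pos.mp (by omega : 0 < U.card)
  have hvU : {v} ≠ U := fun h => by rw [← h, Finset.card_singleton] at hU; omega
  obtain ⟨A, hAU, hA, hAU', hcard⟩ : lam E U ∈ {k | ∃ A ⊆ U, A.Nonempty ∧ A ≠ U ∧
      k = Multiset.card (cutEdges (induced E U) A)} :=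
    Nat.sInf_mem ⟨_, {v}, Finset.singleton_subset_iff.mpr hv, Finset.singleton_nonempty v, hvU, rfl⟩
  exact ⟨A, hAU, hA, hAU', hcard.symm⟩

lemma one_le_lam_of_mem (he : e ∈ E) (he2 : 2 ≤ e.card) : 1 ≤ lam E e := by
  obtain ⟨A, hAe, ⟨a, ha⟩, hAe', hcard⟩ := exists_card_cutEdges_eq_lam (E := E) he2
  rw [← hcard]
  refine Multiset.card_pos_iff_exists_mem.mpr ⟨e, Multiset.mem_filter.mpr
    ⟨mem_induced.mpr ⟨he, le_rfl⟩, ⟨a, Finset.mem_inter.mpr ⟨hAe ha, ha⟩⟩, ?_⟩⟩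
  exact Finset.sdiff_nonempty.mpr fun heA => hAe' (hAe.antisymm heA)

lemma lam_le_strengthOn (heU : e ⊆ U) : lam E U ≤ strengthOn E U e :=
  Finset.le_sup (by simp [heU])

lemma strengthOn_mono {U' : Finset α} (hUU' : U ⊆ U') : strengthOn E U e ≤ strengthOn E U' e :=
  Finset.sup_mono (Finset.filter_subset_filter _ (Finset.powerset_mono.mpr hUU'))

lemma one_le_strengthOn (he : e ∈ E) (he2 : 2 ≤ e.card) (heU : e ⊆ U) : 1 ≤ strengthOn E U e :=
  ((one_le_lam_of_mem he he2).trans (lam_le_strengthOn le_rfl)).trans (strengthOn_mono heU)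

lemma sum_inv_strengthOn_le_of_subset (hE : ∀ e ∈ E, 2 ≤ e.card) (hAU : A ⊆ U) :
    ((induced E A).map fun e => (1 : ℝ) / strengthOn E U e).sum ≤
      ((induced E A).map fun e => (1 : ℝ) / strengthOn E A e).sum := by
  refine Multiset.sum_map_le_sum_map _ _ fun e he => ?_
  obtain ⟨heE, heA⟩ := mem_induced.mp he
  have hpos : (0 : ℝ) < strengthOn E A e := by exact_mod_cast one_le_strengthOn heE (hE e heE) heA
  exact one_div_le_one_div_of_le hpos (by exact_mod_cast strengthOn_mono hAU)

lemma sum_inv_strengthOn_cutEdges_le_one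
    (hA : Multiset.card (cutEdges (induced E U) A) = lam E U) :
    ((cutEdges (induced E U) A).map fun e => (1 : ℝ) / strengthOn E U e).sum ≤ 1 := by
  rcases Nat.eq_zero_or_pos (lam E U) with hlam | hlam
  · rw [Multiset.card_eq_zero.mp (hA.trans hlam)]
    simp
  have hterm : ∀ x ∈ (cutEdges (induced E U) A).map fun e => (1 : ℝ) / strengthOn E U e,
      x ≤ 1 / lam E U := by
    simp only [Multiset.mem_map]
    rintro _ ⟨e, he, rfl⟩
    have heU := (mem_induced.mp (Multiset.mem_of_mem_filter he)).2
    exact one_div_le_one_div_of_le (by exact_mod_cast hlam)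
      (by exact_mod_cast lam_le_strengthOn heU)
  calc _ ≤ Multiset.card (cutEdges (induced E U) A) • (1 / (lam E U : ℝ)) := by
        simpa using Multiset.sum_le_card_nsmul _ _ hterm
    _ = 1 := by
        rw [hA, nsmul_eq_mul]
        field_simp

lemma kappaOn_le_card : kappaOn E U ≤ U.card :=
  (Set.ncard_image_le (Finset.finite_toSet U)).trans (Set.ncard_coe_finset U).le

lemma one_le_kappaOn (hU : U.Nonempty) : 1 ≤ kappaOn E U :=
  (Set.ncard_pos (U.finite_toSet.image _)).mpr ((Finset.coe_nonempty.mpr hU).image _)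

lemma ncard_image_connectedComponentMk_le_kappaOn (hAU : A ⊆ U) :
    ((toGraph (induced E U)).connectedComponentMk '' ↑A).ncard ≤ kappaOn E A := by
  have hle : toGraph (induced E A) ≤ toGraph (induced E U) := fun x y ⟨hxy, f, hf, hx, hy⟩ =>
    ⟨hxy, f, mem_induced.mpr ⟨(mem_induced.mp hf).1, (mem_induced.mp hf).2.trans hAU⟩, hx, hy⟩
  have himage : (toGraph (induced E U)).connectedComponentMk '' ↑A =
      SimpleGraph.ConnectedComponent.map (SimpleGraph.Hom.ofLE hle) ''
        ((toGraph (induced E A)).connectedComponentMk '' ↑A) := by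
    rw [Set.image_image]
    rfl
  rw [himage]
  exact Set.ncard_image_le (Set.toFinite _)

lemma kappaOn_le_add (hAU : A ⊆ U) : kappaOn E U ≤ kappaOn E A + kappaOn E (U \ A) := by
  calc kappaOn E U = ((toGraph (induced E U)).connectedComponentMk '' ↑A ∪
        (toGraph (induced E U)).connectedComponentMk '' ↑(U \ A)).ncard := by
        rw [kappaOn, ← Set.image_union, ← Finset.coe_union, Finset.union_sdiff_of_subset hAU]
    _ ≤ _ := (Set.ncard_union_le _ _).trans (add_le_add
        (ncard_image_connectedComponentMk_le_kappaOn hAU)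
        (ncard_image_connectedComponentMk_le_kappaOn Finset.sdiff_subset))

lemma reachable_of_one_le_lam (hlam : 1 ≤ lam E U) {u v : α} (hu : u ∈ U) (hv : v ∈ U) :
    (toGraph (induced E U)).Reachable u v := by
  classical
  by_contra huv
  set A := U.filter ((toGraph (induced E U)).Reachable u)
  have hcut : cutEdges (induced E U) A = 0 := by
    refine Multiset.filter_eq_nil.mpr fun f hf ⟨⟨x, hx⟩, ⟨y, hy⟩⟩ => ?_
    obtain ⟨hxf, hxA⟩ := Finset.mem_inter.mp hx
    obtain ⟨hyf, hyA⟩ := Finset.mem_sdiff.mp hy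
    have hxy : (toGraph (induced E U)).Adj x y :=
      ⟨fun h => hyA (h ▸ hxA), f, hf, hxf, hyf⟩
    exact hyA (Finset.mem_filter.mpr
      ⟨(mem_induced.mp hf).2 hyf, (Finset.mem_filter.mp hxA).2.trans hxy.reachable⟩)
  have hAU : A ≠ U := fun h => huv (Finset.mem_filter.mp (h ▸ hv)).2
  have := lam_le_card_cutEdges (Finset.filter_subset _ U)
    ⟨u, Finset.mem_filter.mpr ⟨hu, .refl u⟩⟩ hAU (E := E)
  rw [hcut, Multiset.card_zero] at this
  omega

lemma kappaOn_le_one (hlam : 1 ≤ lam E U) : kappaOn E U ≤ 1 := by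
  refine (Set.ncard_le_one (U.finite_toSet.image _)).mpr ?_
  rintro _ ⟨u, hu, rfl⟩ _ ⟨v, hv, rfl⟩
  exact SimpleGraph.ConnectedComponent.eq.mpr (reachable_of_one_le_lam hlam hu hv)

theorem sum_inv_strengthOn_le (hE : ∀ e ∈ E, 2 ≤ e.card) (U : Finset α) :
    ((induced E U).map fun e => (1 : ℝ) / strengthOn E U e).sum ≤ U.card - kappaOn E U := by
  induction U using Finset.strongInduction with
  | H U ih =>
  by_cases hU : U.card < 2
  · have hno_edges : induced E U = 0 := Multiset.filter_eq_nil.mpr fun e he heU => by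
      have := Finset.card_le_card heU; have := hE e he; omega
    simpa [hno_edges] using (kappaOn_le_card (E := E) (U := U))
  obtain ⟨A, hAU, hA, hAU', hcut⟩ := exists_card_cutEdges_eq_lam (E := E) (not_lt.mp hU)
  have hB : (U \ A).Nonempty := Finset.sdiff_nonempty.mpr fun h => hAU' (hAU.antisymm h)
  have ihA := ih A (Finset.ssubset_iff_subset_ne.mpr ⟨hAU, hAU'⟩)
  have ihB := ih (U \ A) (Finset.sdiff_ssubset hAU hA)
  have hinA := sum_inv_strengthOn_le_of_subset hE hAU
  have hinB := sum_inv_strengthOn_le_of_subset hE (show U \ A ⊆ U from Finset.sdiff_subset)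
  have hcard : (A.card : ℝ) + (U \ A).card = U.card := by
    rw [add_comm]
    exact_mod_cast Finset.card_sdiff_add_card_eq_card hAU
  have hnonempty : ∀ e ∈ E, e.Nonempty := fun e he => Finset.card_pos.mp (by have := hE e he; omega)
  rw [induced_eq_add_add_cutEdges hnonempty hAU, Multiset.map_add, Multiset.map_add,
    Multiset.sum_add, Multiset.sum_add]
  rcases Nat.eq_zero_or_pos (lam E U) with hlam | hlam
  · rw [Multiset.card_eq_zero.mp (hcut.trans hlam), Multiset.map_zero, Multiset.sum_zero]
    have : (kappaOn E U : ℝ) ≤ kappaOn E A + kappaOn E (U \ A) := by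
      exact_mod_cast kappaOn_le_add hAU
    linarith
  · have hC := sum_inv_strengthOn_cutEdges_le_one hcut
    have hU1 : (kappaOn E U : ℝ) ≤ 1 := by exact_mod_cast kappaOn_le_one hlam
    have hA1 : (1 : ℝ) ≤ kappaOn E A := by exact_mod_cast one_le_kappaOn hA
    have hB1 : (1 : ℝ) ≤ kappaOn E (U \ A) := by exact_mod_cast one_le_kappaOn hB
    linarith

lemma induced_univ [Fintype α] : induced E Finset.univ = E :=
  Multiset.filter_eq_self.mpr fun e _ => Finset.subset_univ e

lemma kappaOn_univ [Fintype α] : kappaOn E Finset.univ = kappa E := by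
  rw [kappaOn, Finset.coe_univ, Set.image_univ, induced_univ,
    Set.range_eq_univ.mpr fun c => c.exists_rep, Set.ncard_univ, kappa]

lemma strengthOn_univ [Fintype α] : strengthOn E Finset.univ = strength E := rfl

end Induced

theorem sum_inv_strength_le_general (E : Multiset (Finset V)) (hE : ∀ e ∈ E, 2 ≤ e.card) :
    (E.map (fun e => (1 : ℝ) / (strength E e : ℝ))).sum ≤
      (Fintype.card V : ℝ) - (kappa E : ℝ) := by
  simpa only [induced_univ, strengthOn_univ, kappaOn_univ, Finset.card_univ] using
    sum_inv_strengthOn_le hE .univ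

/-- for every hypergraph on `n ≥ 1` vertices,
`∑_{e ∈ E} 1/γ_H(e) ≤ n - κ(H)`. -/
theorem sum_inv_strength_le (E : Multiset (Finset V)) (hE : ∀ e ∈ E, 2 ≤ e.card)
    (hn : 1 ≤ Fintype.card V) :
    (E.map (fun e => (1 : ℝ) / (strength E e : ℝ))).sum ≤
      (Fintype.card V : ℝ) - (kappa E : ℝ) :=
  sum_inv_strength_le_general E hE
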